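/- arXiv:1803.02069 — 5 statements merged into one kernel-verified Lean document; each statement's English description precedes it below -/
import Mathlib

section
/- For every rational number t and every rational number x, the polynomial identity P(x) = Q(x)² − R(x) holds, where P, Q, R are the explicit polynomials defined in the context. -/
/-- Mestre's degree-12 polynomial `P` built from the six consecutive squares. -/
noncomputable def P (t x : ℚ) : ℚ :=
  (x ^ 2 - (t - 5/2) ^ 4) * (x ^ 2 - (t - 3/2) ^ 4) * (x ^ 2 - (t - 1/2) ^ 4) *
    (x ^ 2 - (t + 1/2) ^ 4) * (x ^ 2 - (t + 3/2) ^ 4) * (x ^ 2 - (t + 5/2) ^ 4)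

/-- The polynomial `Q` with `P = Q^2 - R`. -/
noncomputable def Q (t x : ℚ) : ℚ :=
  x ^ 6 + (1/16) * (-48 * t ^ 4 - 840 * t ^ 2 - 707) * x ^ 4 +
    (1/256) * (768 * t ^ 8 + 8960 * t ^ 6 - 9184 * t ^ 4 - 322000 * t ^ 2 + 51331) * x ^ 2 +
    (1/4096) * (-4096 * t ^ 12 + 71680 * t ^ 10 - 1994496 * t ^ 8 - 50973440 * t ^ 6 -
      251212528 * t ^ 4 - 260162280 * t ^ 2 - 50625)

/-- The quartic remainder `R` with `P = Q^2 - R`. -/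
noncomputable def R (t x : ℚ) : ℚ :=
  9 * t ^ 2 *
    ((1/64) * (5376 * t ^ 10 + 779520 * t ^ 8 + 11657184 * t ^ 6 + 57509200 * t ^ 4 +
        95561365 * t ^ 2 + 36613360) * x ^ 4 -
      (1/512) * (86016 * t ^ 14 + 6113280 * t ^ 12 + 71158528 * t ^ 10 + 145053440 * t ^ 8 -
        1767894864 * t ^ 6 - 8757574840 * t ^ 4 - 7679989163 * t ^ 2 + 1441328880) * x ^ 2 +
      (1/16384) * (336 * t ^ 6 + 11320 * t ^ 4 + 54229 * t ^ 2 + 56560) *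
        (4096 * t ^ 12 - 71680 * t ^ 10 + 1220352 * t ^ 8 + 24892160 * t ^ 6 +
          126268912 * t ^ 4 + 129848040 * t ^ 2 + 50625))

/-- For every rational `t` and `x`, the identity `P(x) = Q(x)² − R(x)` holds. -/
theorem stmt_0 (t x : ℚ) : P t x = (Q t x) ^ 2 - R t x := by
  unfold P Q R; ring
end

section
/- For every rational number t and every i ∈ {−5/2, −3/2, −1/2, 1/2, 3/2, 5/2}, one has R((t+i)²) = Q((t+i)²)², where Q and R are the explicit polynomials defined in the context; in particular R((t+i)²) is a square in ℚ. -/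
/-- For every rational `t` and every `i ∈ {−5/2, −3/2, −1/2, 1/2, 3/2, 5/2}`,
`R((t+i)²) = Q((t+i)²)²`; in particular `R((t+i)²)` is a square in `ℚ`. -/
theorem stmt_1 (t : ℚ) (i : ℚ)
    (hi : i ∈ ({-5/2, -3/2, -1/2, 1/2, 3/2, 5/2} : Set ℚ)) :
    R t ((t + i) ^ 2) = (Q t ((t + i) ^ 2)) ^ 2 ∧ IsSquare (R t ((t + i) ^ 2)) := by
  have key : R t ((t + i) ^ 2) = (Q t ((t + i) ^ 2)) ^ 2 := by
    simp only [Set.mem_insert_iff, Set.mem_singleton_iff] at hi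
    rcases hi with h | h | h | h | h | h <;> subst h <;> unfold R Q <;> ring
  exact ⟨key, ⟨Q t ((t + i) ^ 2), by rw [key, sq]⟩⟩
end

section
/- The set of triples {(a(t), b(t), c(t)) : t ∈ ℚ, t ≠ 0} ⊆ ℚ³ is infinite, where a(t), b(t), c(t) are the explicit rational functions defined in the context. Consequently, there are infinitely many distinct quartic curves y² = ax⁴ + bx² + c over ℚ admitting a 6-term sequence of consecutive squares as x-coordinates of rational points. -/
/-- The leading coefficient `a(t)` of the quartic model `y² = a(t)x⁴ + b(t)x² + c(t)`. -/
noncomputable def a (t : ℚ) : ℚ :=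
  9 * t ^ 2 * ((1/64) * (5376 * t ^ 10 + 779520 * t ^ 8 + 11657184 * t ^ 6 + 57509200 * t ^ 4 +
    95561365 * t ^ 2 + 36613360))

/-- The middle coefficient `b(t)`. -/
noncomputable def b (t : ℚ) : ℚ :=
  -(9 * t ^ 2) * ((1/512) * (86016 * t ^ 14 + 6113280 * t ^ 12 + 71158528 * t ^ 10 +
    145053440 * t ^ 8 - 1767894864 * t ^ 6 - 8757574840 * t ^ 4 - 7679989163 * t ^ 2 +
    1441328880))

/-- The constant coefficient `c(t)`. -/
noncomputable def c (t : ℚ) : ℚ :=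
  9 * t ^ 2 * ((1/16384) * (336 * t ^ 6 + 11320 * t ^ 4 + 54229 * t ^ 2 + 56560) *
    (4096 * t ^ 12 - 71680 * t ^ 10 + 1220352 * t ^ 8 + 24892160 * t ^ 6 +
      126268912 * t ^ 4 + 129848040 * t ^ 2 + 50625))

lemma a_mono : StrictMono (fun n : ℕ => a ((n : ℚ) + 1)) := by
  apply strictMono_nat_of_lt_succ
  intro n
  have hn : (0 : ℚ) ≤ (n : ℚ) := Nat.cast_nonneg n
  simp only [a]
  push_cast
  nlinarith [pow_nonneg hn 2, pow_nonneg hn 3, pow_nonneg hn 4, pow_nonneg hn 5,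
    pow_nonneg hn 6, pow_nonneg hn 7, pow_nonneg hn 8, pow_nonneg hn 9,
    pow_nonneg hn 10, pow_nonneg hn 11]

/-- The set of coefficient triples `(a(t), b(t), c(t))` for nonzero rational `t` is infinite;
hence there are infinitely many distinct quartic curves `y² = ax⁴ + bx² + c` admitting a 6-term
sequence of consecutive squares as `x`-coordinates of rational points. -/
theorem stmt_3 :
    {p : ℚ × ℚ × ℚ | ∃ t : ℚ, t ≠ 0 ∧ p = (a t, b t, c t)}.Infinite := by
  apply Set.infinite_of_injective_forall_mem
    (f := fun n : ℕ => (a ((n : ℚ) + 1), b ((n : ℚ) + 1), c ((n : ℚ) + 1)))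
  · intro m n h
    have h1 : a ((m : ℚ) + 1) = a ((n : ℚ) + 1) := congrArg Prod.fst h
    exact a_mono.injective h1
  · intro n
    refine ⟨(n : ℚ) + 1, by positivity, rfl⟩
end

section
/- Let t ∈ ℚ with t ∉ {0, 1/2, −1/2} and with D₁(t) = 8t⁷ + 4t⁶ + 8t⁵ + 4t⁴ + 2t³ + t² + 2t + 1 ≠ 0. Suppose a, b, c, d, e, f ∈ ℚ satisfy d² = a(t−1)⁸ + b(t−1)⁴ + c, e² = at⁸ + bt⁴ + c, and f² = a(t+1)⁸ + b(t+1)⁴ + c. Then a(t−2)⁸ + b(t−2)⁴ + c = [3(8t⁸ − 20t⁷ + 36t⁶ − 24t⁵ + 2t⁴ + 15t³ + 9t² − 16t − 10)·d²]/(t·D₁(t)) − [3(4t³ − 18t² + 28t − 15)(2t⁴ − 2t³ + 7t² − 2t + 5)·e²]/D₁(t) + [(4t³ − 18t² + 28t − 15)(2t⁵ − 8t⁴ + 15t³ − 15t² + 8t − 2)·f²]/(t·D₁(t)). In particular, (t−2)² is the x-coordinate of a rational point (with y = g) on y² = ax⁴ + bx² + c if and only if the right-hand side is a rational square g². -/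
/-!
In the variable `u = x⁴` the value `a u² + b u + c` is a quadratic polynomial, so its values at
the four points `(t-2)⁴, (t-1)⁴, t⁴, (t+1)⁴` are linearly dependent: the value at `(t-2)⁴` is the
Lagrange interpolant through the other three. The three coefficients of the statement are exactly
these Lagrange weights; after cancellation their common denominator is
`t · D₁(t) = t (2t+1)(2t²-2t+1)(2t²+2t+1)(t²+1)`.
-/

def D₁ (t : ℚ) : ℚ :=
  8 * t ^ 7 + 4 * t ^ 6 + 8 * t ^ 5 + 4 * t ^ 4 + 2 * t ^ 3 + t ^ 2 + 2 * t + 1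

theorem eval_sub_two_eq_lagrange {t : ℚ} (ht : t ≠ 0) (hD : D₁ t ≠ 0) (a b c : ℚ) :
    a * (t - 2) ^ 8 + b * (t - 2) ^ 4 + c =
      3 * (8 * t ^ 8 - 20 * t ^ 7 + 36 * t ^ 6 - 24 * t ^ 5 + 2 * t ^ 4 + 15 * t ^ 3 +
        9 * t ^ 2 - 16 * t - 10) * (a * (t - 1) ^ 8 + b * (t - 1) ^ 4 + c) / (t * D₁ t)
      - 3 * (4 * t ^ 3 - 18 * t ^ 2 + 28 * t - 15) *
          (2 * t ^ 4 - 2 * t ^ 3 + 7 * t ^ 2 - 2 * t + 5) * (a * t ^ 8 + b * t ^ 4 + c) / D₁ t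
      + (4 * t ^ 3 - 18 * t ^ 2 + 28 * t - 15) *
          (2 * t ^ 5 - 8 * t ^ 4 + 15 * t ^ 3 - 15 * t ^ 2 + 8 * t - 2) *
          (a * (t + 1) ^ 8 + b * (t + 1) ^ 4 + c) / (t * D₁ t) := by
  field_simp
  unfold D₁
  ring

/-- If `t ∉ {0, 1/2, −1/2}`, `D₁(t) ≠ 0`, and `a, b, c, d, e, f` satisfy
`d² = a(t−1)⁸ + b(t−1)⁴ + c`, `e² = at⁸ + bt⁴ + c`, `f² = a(t+1)⁸ + b(t+1)⁴ + c`, then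
`a(t−2)⁸ + b(t−2)⁴ + c` equals the stated explicit combination of `d², e², f²`; in particular
`(t−2)²` is the `x`-coordinate of a rational point on `y² = ax⁴ + bx² + c` iff that
combination is a rational square. -/
theorem stmt_8 (t : ℚ) (ht : t ∉ ({0, 1/2, -1/2} : Set ℚ)) (hD : D₁ t ≠ 0)
    (a b c d e f : ℚ)
    (hd : d ^ 2 = a * (t - 1) ^ 8 + b * (t - 1) ^ 4 + c)
    (he : e ^ 2 = a * t ^ 8 + b * t ^ 4 + c)
    (hf : f ^ 2 = a * (t + 1) ^ 8 + b * (t + 1) ^ 4 + c) :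
    a * (t - 2) ^ 8 + b * (t - 2) ^ 4 + c =
      3 * (8 * t ^ 8 - 20 * t ^ 7 + 36 * t ^ 6 - 24 * t ^ 5 + 2 * t ^ 4 + 15 * t ^ 3 +
        9 * t ^ 2 - 16 * t - 10) * d ^ 2 / (t * D₁ t)
      - 3 * (4 * t ^ 3 - 18 * t ^ 2 + 28 * t - 15) *
          (2 * t ^ 4 - 2 * t ^ 3 + 7 * t ^ 2 - 2 * t + 5) * e ^ 2 / D₁ t
      + (4 * t ^ 3 - 18 * t ^ 2 + 28 * t - 15) *
          (2 * t ^ 5 - 8 * t ^ 4 + 15 * t ^ 3 - 15 * t ^ 2 + 8 * t - 2) * f ^ 2 /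
          (t * D₁ t) ∧
    ((∃ g : ℚ, g ^ 2 = a * (t - 2) ^ 8 + b * (t - 2) ^ 4 + c) ↔
      ∃ g : ℚ, g ^ 2 =
        3 * (8 * t ^ 8 - 20 * t ^ 7 + 36 * t ^ 6 - 24 * t ^ 5 + 2 * t ^ 4 + 15 * t ^ 3 +
          9 * t ^ 2 - 16 * t - 10) * d ^ 2 / (t * D₁ t)
        - 3 * (4 * t ^ 3 - 18 * t ^ 2 + 28 * t - 15) *
            (2 * t ^ 4 - 2 * t ^ 3 + 7 * t ^ 2 - 2 * t + 5) * e ^ 2 / D₁ t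
        + (4 * t ^ 3 - 18 * t ^ 2 + 28 * t - 15) *
            (2 * t ^ 5 - 8 * t ^ 4 + 15 * t ^ 3 - 15 * t ^ 2 + 8 * t - 2) * f ^ 2 /
            (t * D₁ t)) := by
  have ht0 : t ≠ 0 := fun h => ht (by simp [h])
  have value_eq := eval_sub_two_eq_lagrange ht0 hD a b c
  rw [← hd, ← he, ← hf] at value_eq
  exact ⟨value_eq, by rw [← value_eq]⟩
end

section
/- The Weierstrass curve Ẽ: y² = x³ − (156217789162987774532352000000000000/40642963201)·x + 22789637573454810302335707893243904000000000000000000/8193662024284801 over ℚ is an elliptic curve (its discriminant is nonzero), the point P̃ = (19558022787408000000/201601, 86476754780118743040000000000/90518849) lies on Ẽ, and P̃ has infinite order in the group Ẽ(ℚ). -/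
/-- The specialized Weierstrass curve `Ẽ` over `ℚ`. -/
noncomputable def Etilde : WeierstrassCurve.Affine ℚ :=
  { a₁ := 0, a₂ := 0, a₃ := 0,
    a₄ := -(156217789162987774532352000000000000 / 40642963201 : ℚ),
    a₆ := (22789637573454810302335707893243904000000000000000000 / 8193662024284801 : ℚ) }

/-! If `|a₄|₂ < |x|₂²` and `|a₆|₂ < |x|₂³` at a point `Q = (x, y)` of `y² = x³ + a₄x + a₆`, the
equation forces `|y|₂² = |x|₂³`, and in the duplication formula
`x(2Q) = (x⁴ - 2a₄x² - 8a₆x + a₄²) / (4y²)` the term `x⁴` dominates the numerator, so the `4` in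
the denominator gives `|x(2Q)|₂ = 4 |x|₂`. The hypotheses persist, so the points `2ⁿQ` are pairwise
distinct and `Q` has infinite order. On `Ẽ` we have `|a₄|₂ = 2⁻²⁰`, `|a₆|₂ = 2⁻³¹` and
`|x(2P̃)|₂ = 2⁻⁶`, so this applies to `2P̃`; it does not apply to `P̃` itself, where `|x|₂² = |a₄|₂`. -/

open WeierstrassCurve WeierstrassCurve.Affine

namespace padicNorm

variable {p : ℕ}

lemma pos_of_lt_sq {q x : ℚ} (h : padicNorm p q < padicNorm p x ^ 2) : 0 < padicNorm p x := by
  refine (padicNorm.nonneg x).lt_of_ne fun hx => ?_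
  rw [← hx] at h
  exact (padicNorm.nonneg q).not_gt (by simpa using h)

variable [Fact p.Prime]

lemma add_eq_left_of_lt {q r : ℚ} (h : padicNorm p r < padicNorm p q) :
    padicNorm p (q + r) = padicNorm p q := by
  rw [add_eq_max_of_ne h.ne', max_eq_left h.le]

lemma add_lt {q r t : ℚ} (hq : padicNorm p q < t) (hr : padicNorm p r < t) :
    padicNorm p (q + r) < t :=
  padicNorm.nonarchimedean.trans_lt (max_lt hq hr)

lemma prime_pow (k : ℕ) : padicNorm p (p ^ k) = ((p : ℚ) ^ k)⁻¹ := by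
  rw [IsAbsoluteValue.abv_pow (padicNorm p), padicNorm_p_of_prime, inv_pow]

lemma prime_pow_mul_div {a b : ℤ} (k : ℕ) (ha : ¬ (p : ℤ) ∣ a) (hb : ¬ (p : ℤ) ∣ b) :
    padicNorm p (p ^ k * a / b) = ((p : ℚ) ^ k)⁻¹ := by
  rw [padicNorm.div, padicNorm.mul, prime_pow, (int_eq_one_iff a).mpr ha,
    (int_eq_one_iff b).mpr hb, mul_one, div_one]

end padicNorm

namespace WeierstrassCurve.Affine

section ShortNF

variable {F : Type*} [Field F] {W : Affine F} [W.IsShortNF]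

lemma equation_iff_of_isShortNF {x y : F} :
    W.Equation x y ↔ y ^ 2 = x ^ 3 + W.a₄ * x + W.a₆ := by
  simp [equation_iff]

lemma negY_of_isShortNF (x y : F) : W.negY x y = -y := by
  simp [negY]

lemma ne_negY_of_isShortNF {x y : F} (hy : 2 * y ≠ 0) :
    y ≠ W.negY x y := by
  rw [negY_of_isShortNF]
  contrapose! hy
  linear_combination hy

lemma addX_self_of_isShortNF [DecidableEq F] {x y : F}
    (h : W.Equation x y) (hy : 2 * y ≠ 0) :
    W.addX x x (W.slope x x y y) =
      (x ^ 4 - 2 * W.a₄ * x ^ 2 - 8 * W.a₆ * x + W.a₄ ^ 2) / (4 * y ^ 2) := by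
  have h₂ : (2 : F) ≠ 0 := left_ne_zero_of_mul hy
  have hy₀ : y ≠ 0 := right_ne_zero_of_mul hy
  have h₄ : (4 : F) ≠ 0 := by rw [show (4 : F) = 2 * 2 by norm_num]; exact mul_ne_zero h₂ h₂
  rw [equation_iff_of_isShortNF] at h
  have hslope : W.slope x x y y = (3 * x ^ 2 + W.a₄) / (2 * y) := by
    rw [slope_of_Y_ne rfl (ne_negY_of_isShortNF hy), negY_of_isShortNF, a₁_of_isShortNF,
      a₂_of_isShortNF]
    ring
  rw [addX, hslope, a₁_of_isShortNF, a₂_of_isShortNF]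
  field_simp
  linear_combination (-32 * x) * h

end ShortNF

section PadicNorm

variable {W : Affine ℚ} [W.IsShortNF]

lemma padicNorm_sq_eq_of_equation {p : ℕ} [Fact p.Prime] {x y : ℚ} (h : W.Equation x y)
    (hA : padicNorm p W.a₄ < padicNorm p x ^ 2) (hB : padicNorm p W.a₆ < padicNorm p x ^ 3) :
    padicNorm p y ^ 2 = padicNorm p x ^ 3 := by
  have hx := padicNorm.pos_of_lt_sq hA
  rw [equation_iff_of_isShortNF, add_assoc] at h
  rw [← IsAbsoluteValue.abv_pow (padicNorm p), h, padicNorm.add_eq_left_of_lt,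
    IsAbsoluteValue.abv_pow (padicNorm p)]
  rw [IsAbsoluteValue.abv_pow (padicNorm p)]
  refine padicNorm.add_lt ?_ hB
  rw [padicNorm.mul]
  calc padicNorm p W.a₄ * padicNorm p x < padicNorm p x ^ 2 * padicNorm p x := by gcongr
    _ = padicNorm p x ^ 3 := by ring

lemma padicNorm_two_addX_self {x y : ℚ} (h : W.Equation x y)
    (hA : padicNorm 2 W.a₄ < padicNorm 2 x ^ 2) (hB : padicNorm 2 W.a₆ < padicNorm 2 x ^ 3) :
    2 * y ≠ 0 ∧ padicNorm 2 (W.addX x x (W.slope x x y y)) = 4 * padicNorm 2 x := by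
  set a := padicNorm 2 x
  have ha : 0 < a := padicNorm.pos_of_lt_sq hA
  have hy := padicNorm_sq_eq_of_equation h hA hB
  have hy₀ : y ≠ 0 := by
    rintro rfl
    simp only [padicNorm.zero] at hy
    exact (pow_pos ha 3).ne' (by simpa using hy.symm)
  have hA₀ := padicNorm.nonneg (p := 2) W.a₄
  have hB₀ := padicNorm.nonneg (p := 2) W.a₆
  have h2 : padicNorm 2 (2 : ℚ) ≤ 1 := by exact_mod_cast padicNorm.of_nat (p := 2) 2
  have h8 : padicNorm 2 (8 : ℚ) ≤ 1 := by exact_mod_cast padicNorm.of_nat (p := 2) 8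
  have hrest : padicNorm 2 (-(2 * W.a₄ * x ^ 2) + -(8 * W.a₆ * x) + W.a₄ ^ 2) < a ^ 4 := by
    refine padicNorm.add_lt (padicNorm.add_lt ?_ ?_) ?_ <;>
      simp only [padicNorm.neg, padicNorm.mul, IsAbsoluteValue.abv_pow (padicNorm 2)]
    · calc _ ≤ 1 * padicNorm 2 W.a₄ * a ^ 2 := by gcongr
        _ < a ^ 2 * a ^ 2 := by gcongr; rwa [one_mul]
        _ = a ^ 4 := by ring
    · calc _ ≤ 1 * padicNorm 2 W.a₆ * a := by gcongr
        _ < a ^ 3 * a := by gcongr; rwa [one_mul]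
        _ = a ^ 4 := by ring
    · calc _ < (a ^ 2) ^ 2 := by gcongr
        _ = a ^ 4 := by ring
  have hnum : padicNorm 2 (x ^ 4 - 2 * W.a₄ * x ^ 2 - 8 * W.a₆ * x + W.a₄ ^ 2) = a ^ 4 := by
    rw [show x ^ 4 - 2 * W.a₄ * x ^ 2 - 8 * W.a₆ * x + W.a₄ ^ 2
        = x ^ 4 + (-(2 * W.a₄ * x ^ 2) + -(8 * W.a₆ * x) + W.a₄ ^ 2) by ring,
      padicNorm.add_eq_left_of_lt, IsAbsoluteValue.abv_pow (padicNorm 2)]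
    rwa [IsAbsoluteValue.abv_pow (padicNorm 2)]
  have hden : padicNorm 2 (4 * y ^ 2) = a ^ 3 / 4 := by
    rw [padicNorm.mul, IsAbsoluteValue.abv_pow (padicNorm 2), hy,
      show (4 : ℚ) = (2 : ℕ) ^ 2 by norm_num, padicNorm.prime_pow]
    ring
  have hy₂ : 2 * y ≠ 0 := mul_ne_zero two_ne_zero hy₀
  refine ⟨hy₂, ?_⟩
  rw [addX_self_of_isShortNF h hy₂, padicNorm.div, hnum, hden]
  field_simp

lemma exists_add_self_eq_of_padicNorm_two {x y : ℚ} (h : W.Nonsingular x y)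
    (hA : padicNorm 2 W.a₄ < padicNorm 2 x ^ 2) (hB : padicNorm 2 W.a₆ < padicNorm 2 x ^ 3) :
    ∃ (x' y' : ℚ) (h' : W.Nonsingular x' y'),
      Point.some _ _ h + Point.some _ _ h = Point.some _ _ h' ∧
        padicNorm 2 x' = 4 * padicNorm 2 x := by
  obtain ⟨hy, hx'⟩ := padicNorm_two_addX_self h.1 hA hB
  exact ⟨_, _, _, Point.add_self_of_Y_ne (ne_negY_of_isShortNF hy), hx'⟩

lemma exists_two_pow_nsmul_eq_of_padicNorm_two {x y : ℚ} (h : W.Nonsingular x y)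
    (hA : padicNorm 2 W.a₄ < padicNorm 2 x ^ 2) (hB : padicNorm 2 W.a₆ < padicNorm 2 x ^ 3)
    (n : ℕ) :
    ∃ (x' y' : ℚ) (h' : W.Nonsingular x' y'),
      (2 ^ n) • Point.some _ _ h = Point.some _ _ h' ∧
        padicNorm 2 x' = 4 ^ n * padicNorm 2 x := by
  induction n with
  | zero => exact ⟨x, y, h, one_nsmul _, (one_mul _).symm⟩
  | succ n ih =>
    obtain ⟨x', y', h', hn, hx'⟩ := ih
    have hx₀ := padicNorm.nonneg (p := 2) x
    have hle : padicNorm 2 x ≤ padicNorm 2 x' := by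
      rw [hx']
      exact le_mul_of_one_le_left hx₀ (one_le_pow₀ (by norm_num))
    obtain ⟨x'', y'', h'', hdbl, hx''⟩ := exists_add_self_eq_of_padicNorm_two h'
      (hA.trans_le (by gcongr)) (hB.trans_le (by gcongr))
    refine ⟨x'', y'', h'', ?_, ?_⟩
    · rw [pow_succ, mul_two, add_nsmul, hn, hdbl]
    · rw [hx'', hx', pow_succ]
      ring

theorem not_isOfFinAddOrder_of_padicNorm_two {x y : ℚ} (h : W.Nonsingular x y)
    (hA : padicNorm 2 W.a₄ < padicNorm 2 x ^ 2) (hB : padicNorm 2 W.a₆ < padicNorm 2 x ^ 3) :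
    ¬ IsOfFinAddOrder (Point.some _ _ h) := by
  intro hfin
  choose x' y' h' hpow hnorm using exists_two_pow_nsmul_eq_of_padicNorm_two h hA hB
  have hinj : Function.Injective fun n : ℕ => (2 ^ n) • Point.some _ _ h := by
    intro i j hij
    simp only [hpow, Point.some.injEq] at hij
    have := congrArg (padicNorm 2) hij.1
    rw [hnorm, hnorm, mul_left_inj' (padicNorm.pos_of_lt_sq hA).ne'] at this
    exact pow_right_injective₀ (by norm_num) (by norm_num) this
  exact Set.infinite_of_injective_forall_mem hinj
    (fun n => AddSubmonoid.nsmul_mem _ (AddSubmonoid.mem_multiples _) _) hfin.finite_multiples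

end PadicNorm

end WeierstrassCurve.Affine

instance : Etilde.IsShortNF := ⟨rfl, rfl, rfl⟩

lemma padicNorm_two_Etilde_a₄ : padicNorm 2 Etilde.a₄ = (2 ^ 20)⁻¹ := by
  have := padicNorm.prime_pow_mul_div (p := 2) 20 (a := 148980893290508055240966796875)
    (b := 40642963201) (by norm_num) (by norm_num)
  push_cast at this
  rw [show Etilde.a₄ = -(2 ^ 20 * 148980893290508055240966796875 / 40642963201) by
    norm_num [Etilde], padicNorm.neg, this]

lemma padicNorm_two_Etilde_a₆ : padicNorm 2 Etilde.a₆ = (2 ^ 31)⁻¹ := by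
  have := padicNorm.prime_pow_mul_div (p := 2) 31
    (a := 10612251969731790154397351617572784423828125) (b := 8193662024284801)
    (by norm_num) (by norm_num)
  push_cast at this
  rw [show Etilde.a₆ = 2 ^ 31 * 10612251969731790154397351617572784423828125 / 8193662024284801 by
    norm_num [Etilde], this]

/-- The curve `Ẽ : y² = x³ − (156217789162987774532352000000000000/40642963201)x +
22789637573454810302335707893243904000000000000000000/8193662024284801` is an elliptic curve
(nonzero discriminant), the point
`P̃ = (19558022787408000000/201601, 86476754780118743040000000000/90518849)` lies on `Ẽ`, and
`P̃` has infinite order in `Ẽ(ℚ)`. -/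
theorem stmt_12 :
    Etilde.Δ ≠ 0 ∧
    ∃ h : Etilde.Nonsingular (19558022787408000000 / 201601 : ℚ)
        (86476754780118743040000000000 / 90518849 : ℚ),
      ¬ IsOfFinAddOrder (WeierstrassCurve.Affine.Point.some _ _ h) := by
  set x : ℚ := 19558022787408000000 / 201601 with hx
  set y : ℚ := 86476754780118743040000000000 / 90518849 with hy
  have hΔ : Etilde.Δ ≠ 0 := by
    rw [Δ_of_isShortNF]
    norm_num [Etilde]
  have hP : Etilde.Nonsingular x y := by
    rw [← equation_iff_nonsingular_of_Δ_ne_zero hΔ, equation_iff_of_isShortNF, hx, hy]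
    norm_num [Etilde]
  refine ⟨hΔ, hP, fun hfin => ?_⟩
  have hy₂ : 2 * y ≠ 0 := by norm_num [hy]
  have hx₂ : padicNorm 2 (Etilde.addX x x (Etilde.slope x x y y)) = (2 ^ 6)⁻¹ := by
    have := padicNorm.prime_pow_mul_div (p := 2) 6 (a := 211030099558223483015625)
      (b := 556201232521) (by norm_num) (by norm_num)
    push_cast at this
    rw [addX_self_of_isShortNF hP.1 hy₂, ← this, hx, hy]
    norm_num [Etilde]
  have h2P := hfin.nsmul (n := 2)
  rw [two_nsmul, Point.add_self_of_Y_ne (ne_negY_of_isShortNF hy₂)] at h2P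
  refine not_isOfFinAddOrder_of_padicNorm_two _ ?_ ?_ h2P
  · rw [hx₂, padicNorm_two_Etilde_a₄]
    norm_num
  · rw [hx₂, padicNorm_two_Etilde_a₆]
    norm_num
end
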